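/- Let (X,G) be a Cantor dynamical system in which every G-orbit has at least three points. Then the clopen supports of involutions in the full group [G] generate the Boolean algebra CO(X) of clopen subsets of X: every clopen set can be obtained from sets of the form spr(π), with π an involution in [G] having clopen support, using finitely many unions, intersections and complements. -/

import Mathlib

open Set

variable {X : Type*} [TopologicalSpace X]

noncomputable instance Homeomorph.instGroup' : Group (X ≃ₜ X) where
  mul f g := g.trans f
  one := Homeomorph.refl X
  inv := Homeomorph.symm
  mul_assoc _ _ _ := Homeomorph.ext fun _ => rfl
  one_mul _ := Homeomorph.ext fun _ => rfl
  mul_one _ := Homeomorph.ext fun _ => rfl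
  inv_mul_cancel f := Homeomorph.ext fun x => f.symm_apply_apply x

@[simp] theorem Homeomorph.mul_apply' (f g : X ≃ₜ X) (x : X) : (f * g) x = f (g x) := rfl
@[simp] theorem Homeomorph.one_apply' (x : X) : (1 : X ≃ₜ X) x = x := rfl

/-- The support of a homeomorphism. -/
def spr (γ : X ≃ₜ X) : Set X := interior (closure {x | γ x ≠ x})

/-- The orbit of a point under a subgroup of homeomorphisms. -/
def orbitOf (G : Subgroup (X ≃ₜ X)) (x : X) : Set X := {y | ∃ g ∈ G, (g : X ≃ₜ X) x = y}

/-- The full group of a Cantor dynamical system. -/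
def fullGroup (G : Subgroup (X ≃ₜ X)) : Subgroup (X ≃ₜ X) where
  carrier := {γ | ∀ x, γ x ∈ orbitOf G x}
  one_mem' x := ⟨1, G.one_mem, rfl⟩
  mul_mem' {a b} ha hb x := by
    obtain ⟨h, hh, hbx⟩ := hb x
    obtain ⟨g, hg, hax⟩ := ha (b x)
    exact ⟨g * h, G.mul_mem hg hh, by simp only [Homeomorph.mul_apply'] at *; rw [hbx, hax]⟩
  inv_mem' {a} ha := by
    intro x
    obtain ⟨g, hg, hax⟩ := ha (a⁻¹ x)
    refine ⟨g⁻¹, G.inv_mem hg, ?_⟩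
    have : a (a⁻¹ x) = x := a.apply_symm_apply x
    rw [this] at hax
    have : (g⁻¹ : X ≃ₜ X) (g (a⁻¹ x)) = a⁻¹ x := g.symm_apply_apply _
    rw [hax] at this
    exact this


/-- Sets obtainable from a family by finitely many unions, intersections and complements. -/
inductive GenBoolAlg {X : Type*} (S : Set (Set X)) : Set X → Prop
  | basic {A : Set X} : A ∈ S → GenBoolAlg S A
  | union {A B : Set X} : GenBoolAlg S A → GenBoolAlg S B → GenBoolAlg S (A ∪ B)
  | inter {A B : Set X} : GenBoolAlg S A → GenBoolAlg S B → GenBoolAlg S (A ∩ B)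
  | compl {A : Set X} : GenBoolAlg S A → GenBoolAlg S Aᶜ

/-!
Around any point `x` choose `g, h ∈ G` with `x, g x, h x` distinct, and a clopen neighbourhood
`U` of `x` so small that `U`, `g U`, `h U` are pairwise disjoint. Exchanging `U` with `g U` (resp.
`h U`) is an involution of `[G]` with clopen support `U ∪ g U` (resp. `U ∪ h U`), and the
intersection of these two supports is `U`. Such sets `U` form a basis of the topology, so by
compactness every clopen set is a finite union of them.
-/

open Filter Topology

namespace GenBoolAlg

variable {α ι : Type*} {S : Set (Set α)}

theorem biUnion_finset (h₀ : GenBoolAlg S ∅) {f : ι → Set α} (t : Finset ι)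
    (hf : ∀ i ∈ t, GenBoolAlg S (f i)) : GenBoolAlg S (⋃ i ∈ t, f i) := by
  classical
  induction t using Finset.induction_on with
  | empty => simpa using h₀
  | insert i t _ ih =>
    rw [Finset.set_biUnion_insert]
    exact .union (hf i (t.mem_insert_self i))
      (ih fun j hj => hf j (Finset.mem_insert_of_mem hj))

theorem of_isCompact [TopologicalSpace α] {A : Set α} (hA : IsCompact A) (h₀ : GenBoolAlg S ∅)
    (hloc : ∀ x ∈ A, ∃ U, GenBoolAlg S U ∧ U ∈ 𝓝 x ∧ U ⊆ A) : GenBoolAlg S A := by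
  choose U hUgen hUnhds hUA using hloc
  obtain ⟨t, ht⟩ := hA.elim_nhds_subcover' U hUnhds
  have hcover : A = ⋃ x ∈ t, U x x.2 :=
    ht.antisymm (iUnion₂_subset fun x _ => hUA x x.2)
  rw [hcover]
  exact biUnion_finset h₀ t fun x _ => hUgen x x.2

end GenBoolAlg

theorem eventually_smallSets_disjoint_image {Y : Type*} [TopologicalSpace Y] [T2Space Y]
    {f g : X → Y} {x : X} (hf : ContinuousAt f x) (hg : ContinuousAt g x) (hne : f x ≠ g x) :
    ∀ᶠ s in (𝓝 x).smallSets, Disjoint (f '' s) (g '' s) := by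
  obtain ⟨V, hV, W, hW, hVW⟩ := Filter.disjoint_iff.mp (disjoint_nhds_nhds.mpr hne)
  refine (eventually_smallSets' fun s t hst h => h.mono (image_mono hst) (image_mono hst)).mpr
    ⟨f ⁻¹' V ∩ g ⁻¹' W, inter_mem (hf hV) (hg hW), hVW.mono ?_ ?_⟩
  · exact image_subset_iff.mpr fun _ hy => hy.1
  · exact image_subset_iff.mpr fun _ hy => hy.2

theorem exists_isClopen_pairwise_disjoint_images [CompactSpace X] [T2Space X]
    [TotallyDisconnectedSpace X] {g h : X ≃ₜ X} {x : X} (hxg : x ≠ g x) (hxh : x ≠ h x)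
    (hgh : g x ≠ h x) {A : Set X} (hA : A ∈ 𝓝 x) :
    ∃ U, IsClopen U ∧ x ∈ U ∧ U ⊆ A ∧
      Disjoint U (g '' U) ∧ Disjoint U (h '' U) ∧ Disjoint (g '' U) (h '' U) := by
  have hsmall := (eventually_smallSets_subset.mpr hA).and <|
    (eventually_smallSets_disjoint_image continuousAt_id g.continuous.continuousAt hxg).and <|
    (eventually_smallSets_disjoint_image continuousAt_id h.continuous.continuousAt hxh).and
    (eventually_smallSets_disjoint_image g.continuous.continuousAt h.continuous.continuousAt hgh)
  obtain ⟨U, ⟨hxU, hU⟩, hUA, hUg, hUh, hUgh⟩ :=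
    hsmall.exists_mem_basis_of_smallSets (nhds_basis_clopen x)
  simp only [image_id] at hUg hUh
  exact ⟨U, hU, hxU, hUA, hUg, hUh, hUgh⟩

theorem exists_pair_ne_of_three {α : Type*} {s : Set α} {a b c : α} (ha : a ∈ s) (hb : b ∈ s)
    (hc : c ∈ s) (hab : a ≠ b) (hac : a ≠ c) (hbc : b ≠ c) (x : α) :
    ∃ y ∈ s, ∃ z ∈ s, x ≠ y ∧ x ≠ z ∧ y ≠ z := by
  by_cases hxa : x = a
  · exact ⟨b, hb, c, hc, hxa ▸ hab, hxa ▸ hac, hbc⟩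
  by_cases hxb : x = b
  · exact ⟨a, ha, c, hc, hxa, hxb ▸ hbc, hac⟩
  exact ⟨a, ha, b, hb, hxa, hxb, hab⟩

theorem spr_one : spr (1 : X ≃ₜ X) = ∅ := by
  simp [spr]

theorem spr_eq_of_isClopen {γ : X ≃ₜ X} (h : IsClopen {x | γ x ≠ x}) :
    spr γ = {x | γ x ≠ x} := by
  rw [spr, h.isClosed.closure_eq, h.isOpen.interior_eq]

section ImageSwap

open Classical in
noncomputable def imageSwap (g : X ≃ₜ X) (U : Set X) : X → X :=
  fun x => if x ∈ U then g x else if x ∈ g '' U then g.symm x else x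

variable {g : X ≃ₜ X} {U : Set X}

theorem imageSwap_involutive (hd : Disjoint U (g '' U)) : Function.Involutive (imageSwap g U) := by
  intro x
  have hgU : ∀ {y}, y ∈ U → g y ∉ U := fun hy hgy => disjoint_left.mp hd hgy ⟨_, hy, rfl⟩
  by_cases hxU : x ∈ U
  · simp [imageSwap, hxU, hgU hxU]
  by_cases hxgU : x ∈ g '' U
  · obtain ⟨y, hy, rfl⟩ := hxgU
    simp [imageSwap, hy, hgU hy]
  · simp [imageSwap, hxU, hxgU]

theorem continuous_imageSwap (hU : IsClopen U) : Continuous (imageSwap g U) := by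
  classical
  have hgU : IsClopen (g '' U) := ⟨g.isClosedMap U hU.1, g.isOpenMap U hU.2⟩
  refine g.continuous.if (fun x hx => ?_) (g.symm.continuous.if (fun x hx => ?_) continuous_id)
  · rw [ofPred_mem_eq, hU.frontier_eq] at hx
    exact hx.elim
  · rw [ofPred_mem_eq, hgU.frontier_eq] at hx
    exact hx.elim

theorem setOf_imageSwap_ne (hd : Disjoint U (g '' U)) :
    {x | imageSwap g U x ≠ x} = U ∪ g '' U := by
  ext x
  have hgU : ∀ {y}, y ∈ U → g y ∉ U := fun hy hgy => disjoint_left.mp hd hgy ⟨_, hy, rfl⟩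
  have hne : ∀ {y}, y ∈ U → g y ≠ y := fun hy h => hgU hy (h.symm ▸ hy)
  by_cases hxU : x ∈ U
  · simp [imageSwap, hxU, hne hxU]
  by_cases hxgU : x ∈ g '' U
  · obtain ⟨y, hy, rfl⟩ := hxgU
    simp [imageSwap, hy, hgU hy, (hne hy).symm]
  · simp [imageSwap, hxU, hxgU]

noncomputable def imageSwapHomeo (g : X ≃ₜ X) (hU : IsClopen U) (hd : Disjoint U (g '' U)) :
    X ≃ₜ X where
  toEquiv := (imageSwap_involutive hd).toPerm
  continuous_toFun := continuous_imageSwap hU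
  continuous_invFun := continuous_imageSwap hU

variable (hU : IsClopen U) (hd : Disjoint U (g '' U))

theorem imageSwapHomeo_mul_self : imageSwapHomeo g hU hd * imageSwapHomeo g hU hd = 1 :=
  Homeomorph.ext (imageSwap_involutive hd)

theorem imageSwapHomeo_mem_fullGroup {G : Subgroup (X ≃ₜ X)} (hg : g ∈ G) :
    imageSwapHomeo g hU hd ∈ fullGroup G := by
  intro x
  change imageSwap g U x ∈ orbitOf G x
  by_cases hxU : x ∈ U
  · simpa [imageSwap, hxU] using ⟨g, hg, rfl⟩
  by_cases hxgU : x ∈ g '' U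
  · simpa [imageSwap, hxU, hxgU] using ⟨g⁻¹, G.inv_mem hg, rfl⟩
  · simpa [imageSwap, hxU, hxgU] using ⟨1, G.one_mem, rfl⟩

theorem spr_imageSwapHomeo : spr (imageSwapHomeo g hU hd) = U ∪ g '' U := by
  have hgU : IsClopen (g '' U) := ⟨g.isClosedMap U hU.1, g.isOpenMap U hU.2⟩
  have hsupp : {x | imageSwapHomeo g hU hd x ≠ x} = U ∪ g '' U := setOf_imageSwap_ne hd
  rw [spr_eq_of_isClopen (hsupp ▸ hU.union hgU), hsupp]

end ImageSwap

section InvolutionSupports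

def involutionSupports (G : Subgroup (X ≃ₜ X)) : Set (Set X) :=
  {S | ∃ π ∈ fullGroup G, π * π = 1 ∧ IsClopen (spr π) ∧ S = spr π}

variable {G : Subgroup (X ≃ₜ X)}

theorem empty_mem_involutionSupports : ∅ ∈ involutionSupports G :=
  ⟨1, (fullGroup G).one_mem, mul_one 1, spr_one (X := X) ▸ isClopen_empty, spr_one.symm⟩

theorem union_image_mem_involutionSupports {g : X ≃ₜ X} (hg : g ∈ G) {U : Set X}
    (hU : IsClopen U) (hd : Disjoint U (g '' U)) : U ∪ g '' U ∈ involutionSupports G := by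
  have hspr := spr_imageSwapHomeo hU hd
  exact ⟨imageSwapHomeo g hU hd, imageSwapHomeo_mem_fullGroup hU hd hg,
    imageSwapHomeo_mul_self hU hd,
    hspr ▸ hU.union ⟨g.isClosedMap U hU.1, g.isOpenMap U hU.2⟩, hspr.symm⟩

theorem genBoolAlg_of_pairwise_disjoint_images {g h : X ≃ₜ X} (hg : g ∈ G) (hh : h ∈ G)
    {U : Set X} (hU : IsClopen U) (hUg : Disjoint U (g '' U)) (hUh : Disjoint U (h '' U))
    (hgh : Disjoint (g '' U) (h '' U)) : GenBoolAlg (involutionSupports G) U := by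
  have hU_eq : U = (U ∪ g '' U) ∩ (U ∪ h '' U) := by
    rw [← union_inter_distrib_left, hgh.inter_eq, union_empty]
  rw [hU_eq]
  exact .inter (.basic (union_image_mem_involutionSupports hg hU hUg))
    (.basic (union_image_mem_involutionSupports hh hU hUh))

theorem exists_genBoolAlg_involutionSupports_mem_nhds [CompactSpace X] [T2Space X]
    [TotallyDisconnectedSpace X] {x : X}
    (h3 : ∃ a b c : X, a ∈ orbitOf G x ∧ b ∈ orbitOf G x ∧ c ∈ orbitOf G x ∧
      a ≠ b ∧ a ≠ c ∧ b ≠ c) {A : Set X} (hA : A ∈ 𝓝 x) :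
    ∃ U, GenBoolAlg (involutionSupports G) U ∧ U ∈ 𝓝 x ∧ U ⊆ A := by
  obtain ⟨a, b, c, ha, hb, hc, hab, hac, hbc⟩ := h3
  obtain ⟨_, ⟨g, hg, rfl⟩, _, ⟨h, hh, rfl⟩, hxg, hxh, hgh⟩ :=
    exists_pair_ne_of_three ha hb hc hab hac hbc x
  obtain ⟨U, hU, hxU, hUA, hUg, hUh, hUgh⟩ :=
    exists_isClopen_pairwise_disjoint_images hxg hxh hgh hA
  exact ⟨U, genBoolAlg_of_pairwise_disjoint_images hg hh hU hUg hUh hUgh,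
    hU.isOpen.mem_nhds hxU, hUA⟩

end InvolutionSupports

theorem clopen_generated_by_involution_supports_general {X : Type*} [TopologicalSpace X] [CompactSpace X] [TopologicalSpace.MetrizableSpace X] [TotallyDisconnectedSpace X]
    (G : Subgroup (X ≃ₜ X))
    (h3 : ∀ x : X, ∃ a b c : X, a ∈ orbitOf G x ∧ b ∈ orbitOf G x ∧ c ∈ orbitOf G x ∧
      a ≠ b ∧ a ≠ c ∧ b ≠ c) :
    ∀ A : Set X, IsClopen A →
      GenBoolAlg {S : Set X | ∃ π ∈ fullGroup G, π * π = 1 ∧ IsClopen (spr π) ∧ S = spr π} A := by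
  intro A hA
  exact GenBoolAlg.of_isCompact hA.isClosed.isCompact (.basic empty_mem_involutionSupports)
    fun x hx => exists_genBoolAlg_involutionSupports_mem_nhds (h3 x) (hA.isOpen.mem_nhds hx)

/-- If every orbit has at least three points, the clopen supports of involutions in the full
group generate the Boolean algebra of clopen sets. -/
theorem clopen_generated_by_involution_supports {X : Type*} [TopologicalSpace X] [CompactSpace X] [TopologicalSpace.MetrizableSpace X] [TotallyDisconnectedSpace X] [PerfectSpace X] [Nonempty X]
    (G : Subgroup (X ≃ₜ X))
    (h3 : ∀ x : X, ∃ a b c : X, a ∈ orbitOf G x ∧ b ∈ orbitOf G x ∧ c ∈ orbitOf G x ∧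
      a ≠ b ∧ a ≠ c ∧ b ≠ c) :
    ∀ A : Set X, IsClopen A →
      GenBoolAlg {S : Set X | ∃ π ∈ fullGroup G, π * π = 1 ∧ IsClopen (spr π) ∧ S = spr π} A :=
  clopen_generated_by_involution_supports_general G h3
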